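/- arXiv:2107.07540 — 6 statements merged into one kernel-verified Lean document; each statement's English description precedes it below -/
import Mathlib

section
/- Let X ⊆ ℝⁿ be a nonempty convex set, Y ⊆ ℝᵐ a nonempty set, and f : ℝⁿ × ℝᵐ → ℝ such that for each y ∈ Y the map x ↦ f(x, y) is differentiable on X and satisfies f(x₂, y) ≥ f(x₁, y) + ⟪∇ₓf(x₁, y), x₂ − x₁⟫ − (L/2)‖x₂ − x₁‖² for all x₁, x₂ ∈ X, and suppose g(x) := sup_{y ∈ Y} f(x, y) is finite on X. If x ∈ X and y* ∈ Y satisfy f(x, y*) = g(x), then v := ∇ₓf(x, y*) is a Fréchet subgradient of g at x relative to X, i.e., liminf_{x' → x, x' ∈ X, x' ≠ x} (g(x') − g(x) − ⟪v, x' − x⟫)/‖x' − x‖ ≥ 0. -/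
/-!
Since `y*` attains the supremum at `x` and `g ≥ f(·, y*)` everywhere on `X`, the quadratic
lower model of `f(·, y*)` at `x` is also one for `g`. It bounds the Fréchet difference quotient
of `g` below by `-(L/2)‖x' - x‖`, which tends to `0`.
-/

open Filter Topology

-- If the set defining `liminf` is not bounded above, `Real.sSup` returns the junk value `0`.
lemma Real.zero_le_liminf_of_tendsto_of_le {α : Type*} {l : Filter α} {u v : α → ℝ}
    (hv : Tendsto v l (𝓝 0)) (hvu : ∀ᶠ a in l, v a ≤ u a) : 0 ≤ liminf u l := by
  rw [liminf_eq]
  by_cases hb : BddAbove {a | ∀ᶠ n in l, a ≤ u n}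
  · refine le_of_forall_pos_le_add fun ε hε => ?_
    have hmem : -ε ∈ {a | ∀ᶠ n in l, a ≤ u n} :=
      ((hv.eventually (lt_mem_nhds (neg_lt_zero.2 hε))).and hvu).mono
        fun a ha => ha.1.le.trans ha.2
    linarith [le_csSup hb hmem]
  · rw [Real.sSup_of_not_bddAbove hb]

section QuadraticMinorant

variable {E : Type*} [NormedAddCommGroup E] [InnerProductSpace ℝ E]

lemma neg_mul_norm_le_div_norm_of_quadratic_minorant {φ : E → ℝ} {v x x' : E} {L : ℝ}
    (h : φ x + inner ℝ v (x' - x) - L / 2 * ‖x' - x‖ ^ 2 ≤ φ x') :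
    -(L / 2 * ‖x' - x‖) ≤ (φ x' - φ x - inner ℝ v (x' - x)) / ‖x' - x‖ := by
  rcases (norm_nonneg (x' - x)).eq_or_lt with h0 | hpos
  · simp [← h0]
  · rw [le_div_iff₀ hpos]
    nlinarith

lemma zero_le_liminf_div_norm_of_quadratic_minorant {φ : E → ℝ} {s : Set E} {v x : E} {L : ℝ}
    (h : ∀ x' ∈ s, φ x + inner ℝ v (x' - x) - L / 2 * ‖x' - x‖ ^ 2 ≤ φ x') :
    0 ≤ liminf (fun x' => (φ x' - φ x - inner ℝ v (x' - x)) / ‖x' - x‖) (𝓝[s] x) := by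
  have hlim : Tendsto (fun x' => -(L / 2 * ‖x' - x‖)) (𝓝[s] x) (𝓝 0) :=
    tendsto_nhdsWithin_of_tendsto_nhds <|
      ((continuous_id.sub continuous_const).norm.const_mul _).neg.tendsto' x 0 (by simp)
  exact Real.zero_le_liminf_of_tendsto_of_le hlim <| eventually_nhdsWithin_of_forall
    fun x' hx' => neg_mul_norm_le_div_norm_of_quadratic_minorant (h x' hx')

end QuadraticMinorant

theorem stmt_3_general {n m : ℕ}
    (X : Set (EuclideanSpace ℝ (Fin n))) (Y : Set (EuclideanSpace ℝ (Fin m)))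
    (L : ℝ)
    (f : EuclideanSpace ℝ (Fin n) → EuclideanSpace ℝ (Fin m) → ℝ)
    (f' : EuclideanSpace ℝ (Fin n) → EuclideanSpace ℝ (Fin m) → EuclideanSpace ℝ (Fin n))
    (hquad : ∀ y ∈ Y, ∀ x₁ ∈ X, ∀ x₂ ∈ X,
      f x₂ y ≥ f x₁ y + (inner ℝ (f' x₁ y) (x₂ - x₁) : ℝ) - L / 2 * ‖x₂ - x₁‖ ^ 2)
    (g : EuclideanSpace ℝ (Fin n) → ℝ)
    (hg : ∀ x ∈ X, IsLUB ((fun y => f x y) '' Y) (g x))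
    (x : EuclideanSpace ℝ (Fin n)) (hx : x ∈ X)
    (ystar : EuclideanSpace ℝ (Fin m)) (hystar : ystar ∈ Y)
    (hattain : f x ystar = g x) :
    0 ≤ Filter.liminf
      (fun x' => (g x' - g x - (inner ℝ (f' x ystar) (x' - x) : ℝ)) / ‖x' - x‖)
      (nhdsWithin x (X \ {x})) := by
  refine zero_le_liminf_div_norm_of_quadratic_minorant (L := L) fun x' hx' => ?_
  calc g x + inner ℝ (f' x ystar) (x' - x) - L / 2 * ‖x' - x‖ ^ 2
      = f x ystar + inner ℝ (f' x ystar) (x' - x) - L / 2 * ‖x' - x‖ ^ 2 := by rw [hattain]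
    _ ≤ f x' ystar := hquad ystar hystar x hx x' hx'.1
    _ ≤ g x' := (hg x' hx'.1).1 ⟨ystar, hystar, rfl⟩

/-- At a point where the supremum defining `g(x) = sup_{y ∈ Y} f(x, y)` is
attained by `y*`, the partial gradient `∇ₓf(x, y*)` is a Fréchet subgradient of `g` at `x`
relative to `X`. -/
theorem stmt_3 {n m : ℕ}
    (X : Set (EuclideanSpace ℝ (Fin n))) (Y : Set (EuclideanSpace ℝ (Fin m)))
    (hXne : X.Nonempty) (hXconv : Convex ℝ X) (hYne : Y.Nonempty)
    (L : ℝ)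
    (f : EuclideanSpace ℝ (Fin n) → EuclideanSpace ℝ (Fin m) → ℝ)
    (f' : EuclideanSpace ℝ (Fin n) → EuclideanSpace ℝ (Fin m) → EuclideanSpace ℝ (Fin n))
    (hdiff : ∀ y ∈ Y, ∀ x ∈ X, HasGradientAt (fun x' => f x' y) (f' x y) x)
    (hquad : ∀ y ∈ Y, ∀ x₁ ∈ X, ∀ x₂ ∈ X,
      f x₂ y ≥ f x₁ y + (inner ℝ (f' x₁ y) (x₂ - x₁) : ℝ) - L / 2 * ‖x₂ - x₁‖ ^ 2)
    (g : EuclideanSpace ℝ (Fin n) → ℝ)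
    (hg : ∀ x ∈ X, IsLUB ((fun y => f x y) '' Y) (g x))
    (x : EuclideanSpace ℝ (Fin n)) (hx : x ∈ X)
    (ystar : EuclideanSpace ℝ (Fin m)) (hystar : ystar ∈ Y)
    (hattain : f x ystar = g x) :
    0 ≤ Filter.liminf
      (fun x' => (g x' - g x - (inner ℝ (f' x ystar) (x' - x) : ℝ)) / ‖x' - x‖)
      (nhdsWithin x (X \ {x})) :=
  stmt_3_general X Y L f f' hquad g hg x hx ystar hystar hattain
end

section
/- Let X ⊆ ℝⁿ be a nonempty convex set, Y ⊆ ℝᵐ a nonempty compact set, and f : ℝⁿ × ℝᵐ → ℝ continuous such that for each y ∈ Y the map x ↦ f(x, y) is differentiable on X and satisfies f(x₂, y) ≥ f(x₁, y) + ⟪∇ₓf(x₁, y), x₂ − x₁⟫ − (L/2)‖x₂ − x₁‖² for all x₁, x₂ ∈ X. Then g(x) := max_{y ∈ Y} f(x, y) is L-weakly convex on X, i.e., the function x ↦ g(x) + (L/2)‖x‖² is convex on X. -/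
/-! A function that has, at every point of a convex set, a supporting affine minorant is convex
there. For `φ = g + (L/2)‖·‖²`, pick `y` attaining the maximum at `x`: the lower quadratic bound
for `f (·, y)` becomes, after adding `(L/2)‖·‖²`, an affine minorant of `f (·, y) + (L/2)‖·‖²`
with slope `f' x y + L • x`, exact at `x`, and it stays below `φ` because `f (·, y) ≤ g`. -/

open scoped RealInnerProductSpace

theorem convexOn_of_forall_exists_linear_minorant {𝕜 E : Type*} [Field 𝕜] [LinearOrder 𝕜]
    [IsStrictOrderedRing 𝕜] [AddCommGroup E] [Module 𝕜 E] {s : Set E} {φ : E → 𝕜}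
    (hs : Convex 𝕜 s) (hφ : ∀ x ∈ s, ∃ ℓ : E →ₗ[𝕜] 𝕜, ∀ z ∈ s, φ x + ℓ (z - x) ≤ φ z) :
    ConvexOn 𝕜 s φ := by
  refine ⟨hs, fun x₁ hx₁ x₂ hx₂ a b ha hb hab => ?_⟩
  obtain ⟨ℓ, hℓ⟩ := hφ _ (hs hx₁ hx₂ ha hb hab)
  set x := a • x₁ + b • x₂
  have hcombo : a • (x₁ - x) + b • (x₂ - x) = 0 := by
    rw [smul_sub, smul_sub, sub_add_sub_comm, ← add_smul, hab, one_smul, sub_self]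
  have hℓ_combo : a * ℓ (x₁ - x) + b * ℓ (x₂ - x) = 0 := by
    simpa only [map_add, map_smul, smul_eq_mul, map_zero] using congrArg ℓ hcombo
  calc φ x = a * (φ x + ℓ (x₁ - x)) + b * (φ x + ℓ (x₂ - x)) := by
        linear_combination (-φ x) * hab - hℓ_combo
    _ ≤ a • φ x₁ + b • φ x₂ := by
        rw [smul_eq_mul, smul_eq_mul]
        gcongr
        exacts [hℓ x₁ hx₁, hℓ x₂ hx₂]

theorem le_add_half_mul_norm_sq_of_le_sub_half_mul_norm_sub_sq {E : Type*}
    [NormedAddCommGroup E] [InnerProductSpace ℝ E] {L a b : ℝ} {v x z : E}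
    (h : a + ⟪v, z - x⟫ - L / 2 * ‖z - x‖ ^ 2 ≤ b) :
    a + L / 2 * ‖x‖ ^ 2 + ⟪v + L • x, z - x⟫ ≤ b + L / 2 * ‖z‖ ^ 2 := by
  rw [norm_sub_sq_real, real_inner_comm x z] at h
  rw [inner_add_left, real_inner_smul_left, inner_sub_right x z x, real_inner_self_eq_norm_sq]
  linarith

theorem stmt_4_general {n m : ℕ}
    (X : Set (EuclideanSpace ℝ (Fin n))) (Y : Set (EuclideanSpace ℝ (Fin m)))
    (hXconv : Convex ℝ X)
    (L : ℝ)
    (f : EuclideanSpace ℝ (Fin n) → EuclideanSpace ℝ (Fin m) → ℝ)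
    (f' : EuclideanSpace ℝ (Fin n) → EuclideanSpace ℝ (Fin m) → EuclideanSpace ℝ (Fin n))
    (hquad : ∀ y ∈ Y, ∀ x₁ ∈ X, ∀ x₂ ∈ X,
      f x₂ y ≥ f x₁ y + (inner ℝ (f' x₁ y) (x₂ - x₁) : ℝ) - L / 2 * ‖x₂ - x₁‖ ^ 2)
    (g : EuclideanSpace ℝ (Fin n) → ℝ)
    (hg : ∀ x, IsGreatest ((fun y => f x y) '' Y) (g x)) :
    ConvexOn ℝ X (fun x => g x + L / 2 * ‖x‖ ^ 2) := by
  refine convexOn_of_forall_exists_linear_minorant hXconv fun x hx => ?_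
  obtain ⟨y, hy, hgx : f x y = g x⟩ := (hg x).1
  refine ⟨innerₗ _ (f' x y + L • x), fun z hz => ?_⟩
  have hfz : f z y ≤ g z := (hg z).2 ⟨y, hy, rfl⟩
  have hminorant := le_add_half_mul_norm_sq_of_le_sub_half_mul_norm_sub_sq (hquad y hy x hx z hz)
  rw [innerₗ_apply_apply, ← hgx]
  linarith

/-- The pointwise maximum `g(x) = max_{y ∈ Y} f(x, y)` of a family of
functions satisfying the `L`-smoothness lower quadratic bound is `L`-weakly convex on `X`,
i.e. `x ↦ g(x) + (L/2)‖x‖²` is convex on `X`. -/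
theorem stmt_4 {n m : ℕ}
    (X : Set (EuclideanSpace ℝ (Fin n))) (Y : Set (EuclideanSpace ℝ (Fin m)))
    (hXne : X.Nonempty) (hXconv : Convex ℝ X)
    (hYne : Y.Nonempty) (hYcomp : IsCompact Y)
    (L : ℝ)
    (f : EuclideanSpace ℝ (Fin n) → EuclideanSpace ℝ (Fin m) → ℝ)
    (hfc : Continuous fun p : EuclideanSpace ℝ (Fin n) × EuclideanSpace ℝ (Fin m) => f p.1 p.2)
    (f' : EuclideanSpace ℝ (Fin n) → EuclideanSpace ℝ (Fin m) → EuclideanSpace ℝ (Fin n))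
    (hdiff : ∀ y ∈ Y, ∀ x ∈ X, HasGradientAt (fun x' => f x' y) (f' x y) x)
    (hquad : ∀ y ∈ Y, ∀ x₁ ∈ X, ∀ x₂ ∈ X,
      f x₂ y ≥ f x₁ y + (inner ℝ (f' x₁ y) (x₂ - x₁) : ℝ) - L / 2 * ‖x₂ - x₁‖ ^ 2)
    (g : EuclideanSpace ℝ (Fin n) → ℝ)
    (hg : ∀ x, IsGreatest ((fun y => f x y) '' Y) (g x)) :
    ConvexOn ℝ X (fun x => g x + L / 2 * ‖x‖ ^ 2) :=
  stmt_4_general X Y hXconv L f f' hquad g hg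
end

section
/- Let X ⊆ ℝⁿ be a nonempty compact convex set, Y ⊆ ℝᵐ a nonempty compact set, L > 0, and f : ℝⁿ × ℝᵐ → ℝ continuous such that for each y ∈ Y the map x ↦ f(x, y) is differentiable on X and satisfies f(x₂, y) ≥ f(x₁, y) + ⟪∇ₓf(x₁, y), x₂ − x₁⟫ − (L/2)‖x₂ − x₁‖² for all x₁, x₂ ∈ X. Define g(x) := max_{y ∈ Y} f(x, y). Fix x ∈ X, let y* ∈ Y satisfy f(x, y*) = g(x), and let x̂ ∈ X be the unique minimizer over X of x' ↦ g(x') + L‖x' − x‖². Then ⟪∇ₓf(x, y*), x̂ − x⟫ ≤ −L‖x̂ − x‖². -/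
/-!
The lower quadratic model makes every `f(·, y)` `L`-weakly convex, that is `(-L)`-strongly convex,
and this passes to the pointwise maximum `g`. Hence `g + L‖· - x‖²` is `L`-strongly convex on `X`,
so its minimizer `x̂` satisfies the quadratic growth bound
`g x̂ + L‖x̂ - x‖² + (L/2)‖x̂ - x‖² ≤ g x`. The model inequality for `f(·, y*)` from `x` to `x̂`,
together with `f(x̂, y*) ≤ g x̂` and `f(x, y*) = g x`, turns this into the claim.
-/

open Filter Topology

section NormedSpace

variable {E : Type*} [NormedAddCommGroup E] [NormedSpace ℝ E]

lemma uniformConvexOn_of_isGreatest_image {ι : Type*} {Y : Set ι} {s : Set E} {φ : ℝ → ℝ}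
    {f : E → ι → ℝ} {g : E → ℝ} (hs : Convex ℝ s)
    (hf : ∀ y ∈ Y, UniformConvexOn s φ fun x ↦ f x y)
    (hg : ∀ x ∈ s, IsGreatest ((fun y ↦ f x y) '' Y) (g x)) :
    UniformConvexOn s φ g := by
  refine ⟨hs, fun x hx x' hx' a b ha hb hab ↦ ?_⟩
  obtain ⟨y, hy, hgy⟩ := (hg _ (hs hx hx' ha hb hab)).1
  have hfx : f x y ≤ g x := (hg x hx).2 ⟨y, hy, rfl⟩
  have hfx' : f x' y ≤ g x' := (hg x' hx').2 ⟨y, hy, rfl⟩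
  rw [← hgy]
  calc f (a • x + b • x') y ≤ a • f x y + b • f x' y - a * b * φ ‖x - x'‖ :=
        (hf y hy).2 hx hx' ha hb hab
    _ ≤ a • g x + b • g x' - a * b * φ ‖x - x'‖ := by
        simp only [smul_eq_mul]; gcongr

lemma StrongConvexOn.add_le_of_isMinOn {s : Set E} {m : ℝ} {f : E → ℝ} {a z : E}
    (hf : StrongConvexOn s m f) (hmin : IsMinOn f s a) (ha : a ∈ s) (hz : z ∈ s) :
    f a + m / 2 * ‖z - a‖ ^ 2 ≤ f z := by
  generalize hq : m / 2 * ‖z - a‖ ^ 2 = q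
  have hseg : ∀ t ∈ Set.Ioo (0 : ℝ) 1, f a ≤ f z - (1 - t) * q := by
    rintro t ⟨ht0, ht1⟩
    have h1t : 0 ≤ 1 - t := sub_nonneg.2 ht1.le
    have hconv := hf.2 hz ha ht0.le h1t (add_sub_cancel t 1)
    have hle := isMinOn_iff.1 hmin _ (hf.1 hz ha ht0.le h1t (add_sub_cancel t 1))
    simp only [smul_eq_mul, hq] at hconv
    have : t * f a ≤ t * (f z - (1 - t) * q) := by linarith
    exact le_of_mul_le_mul_left this ht0
  have hlim : Tendsto (fun t : ℝ ↦ f z - (1 - t) * q) (𝓝[>] 0) (𝓝 (f z - q)) := by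
    have : Continuous fun t : ℝ ↦ f z - (1 - t) * q := by fun_prop
    simpa using this.continuousAt.tendsto.mono_left (nhdsWithin_le_nhds (a := 0))
  linarith [ge_of_tendsto hlim (eventually_of_mem (Ioo_mem_nhdsGT one_pos) hseg)]

end NormedSpace

section InnerProductSpace

variable {E : Type*} [NormedAddCommGroup E] [InnerProductSpace ℝ E]

lemma strongConvexOn_neg_of_lower_quadratic_bound {s : Set E} {L : ℝ} {φ : E → ℝ} {φ' : E → E}
    (hs : Convex ℝ s)
    (hφ : ∀ a ∈ s, ∀ b ∈ s, φ a + inner ℝ (φ' a) (b - a) - L / 2 * ‖b - a‖ ^ 2 ≤ φ b) :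
    StrongConvexOn s (-L) φ := by
  refine ⟨hs, fun x hx y hy a b ha hb hab ↦ ?_⟩
  set z := a • x + b • y
  obtain rfl := eq_sub_of_add_eq hab
  have hxz : x - z = b • (x - y) := by simp only [z]; module
  have hyz : y - z = (-(1 - b)) • (x - y) := by simp only [z]; module
  have hx' := hφ z (hs hx hy ha hb hab) x hx
  have hy' := hφ z (hs hx hy ha hb hab) y hy
  rw [hxz, real_inner_smul_right, norm_smul, Real.norm_of_nonneg hb] at hx'
  rw [hyz, real_inner_smul_right, norm_smul, norm_neg, Real.norm_of_nonneg ha] at hy'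
  simp only [smul_eq_mul]
  nlinarith [mul_le_mul_of_nonneg_left hx' ha, mul_le_mul_of_nonneg_left hy' hb]

lemma strongConvexOn_const_mul_sq_norm_sub {s : Set E} (hs : Convex ℝ s) (c : ℝ) (x₀ : E) :
    StrongConvexOn s (2 * c) fun z ↦ c * ‖z - x₀‖ ^ 2 := by
  refine ⟨hs, fun x _ y _ a b ha hb hab ↦ le_of_eq ?_⟩
  obtain rfl := eq_sub_of_add_eq hab
  have hz : (1 - b) • x + b • y - x₀ = (1 - b) • (x - x₀) + b • (y - x₀) := by module
  have hxy : x - y = (x - x₀) - (y - x₀) := by abel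
  simp only [smul_eq_mul]
  rw [hz, hxy, norm_add_sq_real, norm_sub_sq_real (x - x₀), norm_smul, norm_smul,
    real_inner_smul_left, real_inner_smul_right, Real.norm_of_nonneg ha, Real.norm_of_nonneg hb]
  ring

lemma StrongConvexOn.add_const_mul_sq_norm_sub {s : Set E} {m : ℝ} {f : E → ℝ}
    (hf : StrongConvexOn s m f) (c : ℝ) (x₀ : E) :
    StrongConvexOn s (m + 2 * c) fun z ↦ f z + c * ‖z - x₀‖ ^ 2 :=
  (UniformConvexOn.add hf (strongConvexOn_const_mul_sq_norm_sub hf.1 c x₀)).mono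
    fun r ↦ le_of_eq (by simp only [Pi.add_apply]; ring)

end InnerProductSpace

theorem stmt_9_general {n m : ℕ}
    (X : Set (EuclideanSpace ℝ (Fin n))) (Y : Set (EuclideanSpace ℝ (Fin m)))
    (hXconv : Convex ℝ X)
    (L : ℝ)
    (f : EuclideanSpace ℝ (Fin n) → EuclideanSpace ℝ (Fin m) → ℝ)
    (f' : EuclideanSpace ℝ (Fin n) → EuclideanSpace ℝ (Fin m) → EuclideanSpace ℝ (Fin n))
    (hquad : ∀ y ∈ Y, ∀ x₁ ∈ X, ∀ x₂ ∈ X,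
      f x₂ y ≥ f x₁ y + (inner ℝ (f' x₁ y) (x₂ - x₁) : ℝ) - L / 2 * ‖x₂ - x₁‖ ^ 2)
    (g : EuclideanSpace ℝ (Fin n) → ℝ)
    (hg : ∀ x, IsGreatest ((fun y => f x y) '' Y) (g x))
    (x : EuclideanSpace ℝ (Fin n)) (hx : x ∈ X)
    (ystar : EuclideanSpace ℝ (Fin m)) (hystar : ystar ∈ Y)
    (hattain : f x ystar = g x)
    (xhat : EuclideanSpace ℝ (Fin n)) (hxhatmem : xhat ∈ X)
    (hxhatmin : ∀ z ∈ X, g xhat + L * ‖xhat - x‖ ^ 2 ≤ g z + L * ‖z - x‖ ^ 2) :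
    (inner ℝ (f' x ystar) (xhat - x) : ℝ) ≤ -L * ‖xhat - x‖ ^ 2 := by
  have hg_weak : StrongConvexOn X (-L) g :=
    uniformConvexOn_of_isGreatest_image hXconv
      (fun y hy ↦ strongConvexOn_neg_of_lower_quadratic_bound hXconv (hquad y hy))
      fun z _ ↦ hg z
  have hprox : StrongConvexOn X L fun z ↦ g z + L * ‖z - x‖ ^ 2 := by
    have := hg_weak.add_const_mul_sq_norm_sub L x
    rwa [neg_add_eq_sub, two_mul, add_sub_cancel_right] at this
  have hgrowth := hprox.add_le_of_isMinOn (isMinOn_iff.2 hxhatmin) hxhatmem hx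
  have hfxhat : f xhat ystar ≤ g xhat := (hg xhat).2 ⟨ystar, hystar, rfl⟩
  have hmodel := hquad ystar hystar x hx xhat hxhatmem
  rw [sub_self, norm_zero, norm_sub_rev x xhat] at hgrowth
  linarith

/-- With `g(x) = max_{y ∈ Y} f(x, y)`, `y*` attaining the maximum at `x`, and
`x̂` the unique minimizer over `X` of `x' ↦ g(x') + L‖x' − x‖²`, one has
`⟪∇ₓf(x, y*), x̂ − x⟫ ≤ −L‖x̂ − x‖²`. -/
theorem stmt_9 {n m : ℕ}
    (X : Set (EuclideanSpace ℝ (Fin n))) (Y : Set (EuclideanSpace ℝ (Fin m)))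
    (hXne : X.Nonempty) (hXcomp : IsCompact X) (hXconv : Convex ℝ X)
    (hYne : Y.Nonempty) (hYcomp : IsCompact Y)
    (L : ℝ) (hL : 0 < L)
    (f : EuclideanSpace ℝ (Fin n) → EuclideanSpace ℝ (Fin m) → ℝ)
    (hfc : Continuous fun p : EuclideanSpace ℝ (Fin n) × EuclideanSpace ℝ (Fin m) => f p.1 p.2)
    (f' : EuclideanSpace ℝ (Fin n) → EuclideanSpace ℝ (Fin m) → EuclideanSpace ℝ (Fin n))
    (hdiff : ∀ y ∈ Y, ∀ x ∈ X, HasGradientAt (fun x' => f x' y) (f' x y) x)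
    (hquad : ∀ y ∈ Y, ∀ x₁ ∈ X, ∀ x₂ ∈ X,
      f x₂ y ≥ f x₁ y + (inner ℝ (f' x₁ y) (x₂ - x₁) : ℝ) - L / 2 * ‖x₂ - x₁‖ ^ 2)
    (g : EuclideanSpace ℝ (Fin n) → ℝ)
    (hg : ∀ x, IsGreatest ((fun y => f x y) '' Y) (g x))
    (x : EuclideanSpace ℝ (Fin n)) (hx : x ∈ X)
    (ystar : EuclideanSpace ℝ (Fin m)) (hystar : ystar ∈ Y)
    (hattain : f x ystar = g x)
    (xhat : EuclideanSpace ℝ (Fin n)) (hxhatmem : xhat ∈ X)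
    (hxhatmin : ∀ z ∈ X, g xhat + L * ‖xhat - x‖ ^ 2 ≤ g z + L * ‖z - x‖ ^ 2) :
    (inner ℝ (f' x ystar) (xhat - x) : ℝ) ≤ -L * ‖xhat - x‖ ^ 2 :=
  stmt_9_general X Y hXconv L f f' hquad g hg x hx ystar hystar hattain xhat hxhatmem hxhatmin
end

section
/- Let X ⊆ ℝⁿ be a nonempty compact convex set, Y ⊆ ℝᵐ a nonempty compact set, L, M, α > 0, and f : ℝⁿ × ℝᵐ → ℝ continuous such that for each y ∈ Y the map x ↦ f(x, y) is differentiable on X with ‖∇ₓf(x, y)‖ ≤ M for all x ∈ X, y ∈ Y, and satisfying f(x₂, y) ≥ f(x₁, y) + ⟪∇ₓf(x₁, y), x₂ − x₁⟫ − (L/2)‖x₂ − x₁‖² for all x₁, x₂ ∈ X, y ∈ Y. Define g(x) := max_{y ∈ Y} f(x, y), Φ(x) := min_{x' ∈ X} ( g(x') + L‖x' − x‖² ), and let x̂(x) denote the unique minimizer defining Φ(x). Fix x ∈ X, let y* ∈ Y satisfy f(x, y*) = g(x), and let x⁺ be the unique point of X closest (in Euclidean norm) to x − α∇ₓf(x,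 y*). Then Φ(x⁺) ≤ Φ(x) − 2αL²‖x̂(x) − x‖² + α²LM². -/
/-!
Each `f(·, y)` lies above its quadratic lower model, so `f(·, y) + (L/2)‖·‖²` is convex, hence so is
`g + (L/2)‖·‖²`, and the proximal objective `g + L‖· - x‖²` is `L`-strongly convex. Quadratic growth
at its minimiser `x̂` gives `g(x̂) + (3L/2)‖x̂ - x‖² ≤ g(x) = f(x, y*)`, which together with the model
of `f(·, y*)` at `x` yields `⟪∇ₓf(x, y*), x̂ - x⟫ ≤ -L‖x̂ - x‖²`. Finally `Φ(x⁺) ≤ g(x̂) + L‖x̂ - x⁺‖²`,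
where projecting `x - α∇ₓf(x, y*)` onto `X` does not increase its distance to `x̂ ∈ X`; expanding
that distance and using the two inequalities above and `‖∇ₓf‖ ≤ M` gives the claim.
-/

open Filter Topology

section InnerProductSpace

variable {E : Type*} [NormedAddCommGroup E] [InnerProductSpace ℝ E]

theorem ConvexOn.of_forall_le_inner {s : Set E} (hs : Convex ℝ s) {ψ : E → ℝ} (G : E → E)
    (hG : ∀ a ∈ s, ∀ b ∈ s, ψ a + inner ℝ (G a) (b - a) ≤ ψ b) : ConvexOn ℝ s ψ := by
  refine ⟨hs, fun a ha b hb ta tb hta htb hab => ?_⟩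
  set z := ta • a + tb • b
  have hz : z ∈ s := hs ha hb hta htb hab
  have hcentre : ta • (a - z) + tb • (b - z) = 0 := by
    rw [smul_sub, smul_sub, sub_add_sub_comm, ← add_smul, hab, one_smul, sub_self]
  have hinner : ta * inner ℝ (G z) (a - z) + tb * inner ℝ (G z) (b - z) = 0 := by
    rw [← real_inner_smul_right, ← real_inner_smul_right, ← inner_add_right, hcentre,
      inner_zero_right]
  have ha' := mul_le_mul_of_nonneg_left (hG z hz a ha) hta
  have hb' := mul_le_mul_of_nonneg_left (hG z hz b hb) htb
  simp only [smul_eq_mul]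
  linear_combination ha' + hb' - hinner - ψ z * hab

theorem convexOn_add_sq_norm_of_quadratic_lower_bound {s : Set E} (hs : Convex ℝ s) {φ : E → ℝ}
    (φ' : E → E) {L : ℝ} (hφ : ∀ a ∈ s, ∀ b ∈ s, φ a + inner ℝ (φ' a) (b - a) - L / 2 * ‖b - a‖ ^ 2 ≤ φ b) :
    ConvexOn ℝ s fun z => φ z + L / 2 * ‖z‖ ^ 2 := by
  refine ConvexOn.of_forall_le_inner hs (fun a => φ' a + L • a) fun a ha b hb => ?_
  have hnorm : ‖b‖ ^ 2 = ‖a‖ ^ 2 + 2 * inner ℝ a (b - a) + ‖b - a‖ ^ 2 := by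
    rw [← norm_add_sq_real, add_sub_cancel]
  rw [inner_add_left, real_inner_smul_left, hnorm]
  linear_combination hφ a ha b hb

theorem convexOn_of_isGreatest_image {ι : Type*} {s : Set E} {F : ι → E → ℝ} {Y : Set ι}
    {g : E → ℝ} (hs : Convex ℝ s) (hF : ∀ y ∈ Y, ConvexOn ℝ s (F y))
    (hg : ∀ z ∈ s, IsGreatest ((F · z) '' Y) (g z)) : ConvexOn ℝ s g := by
  refine ⟨hs, fun a ha b hb ta tb hta htb hab => ?_⟩
  obtain ⟨y, hy, hyz⟩ := (hg _ (hs ha hb hta htb hab)).1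
  have hya : F y a ≤ g a := (hg a ha).2 ⟨y, hy, rfl⟩
  have hyb : F y b ≤ g b := (hg b hb).2 ⟨y, hy, rfl⟩
  rw [← hyz]
  calc F y (ta • a + tb • b) ≤ ta • F y a + tb • F y b := (hF y hy).2 ha hb hta htb hab
    _ ≤ ta • g a + tb • g b := by gcongr

theorem StrongConvexOn.add_sq_norm_sub_le_of_isMinOn {s : Set E} {m : ℝ} {h : E → ℝ} {x z : E}
    (hh : StrongConvexOn s m h) (hmin : IsMinOn h s x) (hx : x ∈ s) (hz : z ∈ s) :
    h x + m / 2 * ‖x - z‖ ^ 2 ≤ h z := by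
  have hsegment : ∀ t ∈ Set.Ioo (0 : ℝ) 1, h x + (1 - t) * (m / 2 * ‖x - z‖ ^ 2) ≤ h z := by
    rintro t ⟨ht0, ht1⟩
    have hconv := hh.2 hx hz (sub_nonneg.2 ht1.le) ht0.le (sub_add_cancel 1 t)
    have hle := isMinOn_iff.1 hmin _ (hh.1 hx hz (sub_nonneg.2 ht1.le) ht0.le (sub_add_cancel 1 t))
    simp only [smul_eq_mul] at hconv
    have : t * (h x + (1 - t) * (m / 2 * ‖x - z‖ ^ 2)) ≤ t * h z := by nlinarith
    exact le_of_mul_le_mul_left this ht0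
  have hlim : Tendsto (fun t : ℝ => h x + (1 - t) * (m / 2 * ‖x - z‖ ^ 2)) (𝓝[>] 0)
      (𝓝 (h x + m / 2 * ‖x - z‖ ^ 2)) := by
    refine tendsto_nhdsWithin_of_tendsto_nhds ?_
    convert (by fun_prop : Continuous fun t : ℝ => h x + (1 - t) * (m / 2 * ‖x - z‖ ^ 2)).tendsto 0
      using 2
    ring
  exact le_of_tendsto hlim (Filter.mem_of_superset (Ioo_mem_nhdsGT one_pos) hsegment)

theorem strongConvexOn_add_mul_sq_norm_sub {s : Set E} {g : E → ℝ} {L : ℝ}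
    (hg : ConvexOn ℝ s fun z => g z + L / 2 * ‖z‖ ^ 2) (x : E) :
    StrongConvexOn s L fun z => g z + L * ‖z - x‖ ^ 2 := by
  rw [strongConvexOn_iff_convex]
  refine ((hg.add (((-(2 * L)) • innerₛₗ ℝ x).convexOn hg.1)).add_const (L * ‖x‖ ^ 2)).congr
    fun z _ => ?_
  simp only [Pi.add_apply, LinearMap.smul_apply, innerₛₗ_apply_apply, smul_eq_mul, norm_sub_sq_real,
    real_inner_comm x z]
  ring

theorem Convex.norm_sub_le_of_isMinOn {K : Set E} (hK : Convex ℝ K) {p v z : E}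
    (hmin : IsMinOn (fun w => ‖w - v‖) K p) (hp : p ∈ K) (hz : z ∈ K) :
    ‖z - p‖ ≤ ‖z - v‖ := by
  have hinf : ‖v - p‖ = ⨅ w : K, ‖v - w‖ := by
    have : Nonempty K := ⟨⟨p, hp⟩⟩
    refine le_antisymm (le_ciInf fun w => ?_) (ciInf_le (f := fun w : K => ‖v - w‖) ⟨0, ?_⟩ ⟨p, hp⟩)
    · simpa only [norm_sub_rev] using isMinOn_iff.1 hmin w w.2
    · rintro _ ⟨w, rfl⟩; exact norm_nonneg _
  have hvi := (norm_eq_iInf_iff_real_inner_le_zero hK hp).1 hinf z hz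
  have hexpand : ‖z - v‖ ^ 2 = ‖z - p‖ ^ 2 - 2 * inner ℝ (v - p) (z - p) + ‖v - p‖ ^ 2 := by
    rw [← sub_sub_sub_cancel_right z v p, norm_sub_sq_real, real_inner_comm]
  have hsq : ‖z - p‖ ^ 2 ≤ ‖z - v‖ ^ 2 := by nlinarith [sq_nonneg ‖v - p‖]
  exact (pow_le_pow_iff_left₀ (norm_nonneg _) (norm_nonneg _) two_ne_zero).1 hsq

end InnerProductSpace

theorem stmt_10_general {n m : ℕ}
    (X : Set (EuclideanSpace ℝ (Fin n))) (Y : Set (EuclideanSpace ℝ (Fin m)))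
    (hXconv : Convex ℝ X)
    (L M α : ℝ) (hL : 0 < L) (hα : 0 < α)
    (f : EuclideanSpace ℝ (Fin n) → EuclideanSpace ℝ (Fin m) → ℝ)
    (f' : EuclideanSpace ℝ (Fin n) → EuclideanSpace ℝ (Fin m) → EuclideanSpace ℝ (Fin n))
    (hgradbd : ∀ x ∈ X, ∀ y ∈ Y, ‖f' x y‖ ≤ M)
    (hquad : ∀ y ∈ Y, ∀ x₁ ∈ X, ∀ x₂ ∈ X,
      f x₂ y ≥ f x₁ y + (inner ℝ (f' x₁ y) (x₂ - x₁) : ℝ) - L / 2 * ‖x₂ - x₁‖ ^ 2)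
    (g : EuclideanSpace ℝ (Fin n) → ℝ)
    (hg : ∀ x, IsGreatest ((fun y => f x y) '' Y) (g x))
    (Φ : EuclideanSpace ℝ (Fin n) → ℝ)
    (xhat : EuclideanSpace ℝ (Fin n) → EuclideanSpace ℝ (Fin n))
    (hxhatmem : ∀ x, xhat x ∈ X)
    (hxhatmin : ∀ x, ∀ z ∈ X,
      g (xhat x) + L * ‖xhat x - x‖ ^ 2 ≤ g z + L * ‖z - x‖ ^ 2)
    (hΦ : ∀ x, Φ x = g (xhat x) + L * ‖xhat x - x‖ ^ 2)
    (x : EuclideanSpace ℝ (Fin n)) (hx : x ∈ X)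
    (ystar : EuclideanSpace ℝ (Fin m)) (hystar : ystar ∈ Y)
    (hattain : f x ystar = g x)
    (xp : EuclideanSpace ℝ (Fin n)) (hxpmem : xp ∈ X)
    (hxpproj : ∀ z ∈ X,
      ‖xp - (x - α • f' x ystar)‖ ≤ ‖z - (x - α • f' x ystar)‖) :
    Φ xp ≤ Φ x - 2 * α * L ^ 2 * ‖xhat x - x‖ ^ 2 + α ^ 2 * L * M ^ 2 := by
  set v := x - α • f' x ystar
  have hweak : ConvexOn ℝ X fun z => g z + L / 2 * ‖z‖ ^ 2 := by
    refine convexOn_of_isGreatest_image hXconv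
      (fun y hy => convexOn_add_sq_norm_of_quadratic_lower_bound hXconv (f' · y) (hquad y hy))
      fun z _ => ?_
    simpa only [Set.image_image] using
      (add_left_mono (a := L / 2 * ‖z‖ ^ 2)).map_isGreatest (hg z)
  have hgrowth : g (xhat x) + L * ‖xhat x - x‖ ^ 2 + L / 2 * ‖xhat x - x‖ ^ 2 ≤ g x := by
    simpa using (strongConvexOn_add_mul_sq_norm_sub hweak x).add_sq_norm_sub_le_of_isMinOn
      (isMinOn_iff.2 (hxhatmin x)) (hxhatmem x) hx
  have hdescent : inner ℝ (f' x ystar) (xhat x - x) ≤ -(L * ‖xhat x - x‖ ^ 2) := by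
    have := hquad ystar hystar x hx (xhat x) (hxhatmem x)
    have := (hg (xhat x)).2 ⟨ystar, hystar, rfl⟩
    linarith
  have hproj : ‖xhat x - xp‖ ≤ ‖xhat x - v‖ :=
    hXconv.norm_sub_le_of_isMinOn (isMinOn_iff.2 hxpproj) hxpmem (hxhatmem x)
  have hexpand : ‖xhat x - v‖ ^ 2 = ‖xhat x - x‖ ^ 2
      + 2 * α * inner ℝ (f' x ystar) (xhat x - x) + α ^ 2 * ‖f' x ystar‖ ^ 2 := by
    rw [show xhat x - v = (xhat x - x) + α • f' x ystar by simp only [v]; abel, norm_add_sq_real,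
      real_inner_smul_right, norm_smul, Real.norm_of_nonneg hα.le, mul_pow, real_inner_comm]
    ring
  have hgrad : ‖f' x ystar‖ ^ 2 ≤ M ^ 2 :=
    pow_le_pow_left₀ (norm_nonneg _) (hgradbd x hx ystar hystar) 2
  calc Φ xp ≤ g (xhat x) + L * ‖xhat x - xp‖ ^ 2 := hΦ xp ▸ hxhatmin xp _ (hxhatmem x)
    _ ≤ g (xhat x) + L * ‖xhat x - v‖ ^ 2 := by gcongr
    _ ≤ Φ x - 2 * α * L ^ 2 * ‖xhat x - x‖ ^ 2 + α ^ 2 * L * M ^ 2 := by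
      rw [hexpand, hΦ x]
      linarith [mul_le_mul_of_nonneg_left hdescent (by positivity : 0 ≤ 2 * α * L),
        mul_le_mul_of_nonneg_left hgrad (by positivity : 0 ≤ α ^ 2 * L)]

/-- Per-iteration descent inequality for the projected subgradient step:
`Φ(x⁺) ≤ Φ(x) − 2αL²‖x̂(x) − x‖² + α²LM²`, where `Φ` is the Moreau envelope
`Φ(x) = min_{x' ∈ X}(g(x') + L‖x' − x‖²)` with minimizer `x̂(x)`, and `x⁺` is the
Euclidean projection of `x − α∇ₓf(x, y*)` onto `X`. -/
theorem stmt_10 {n m : ℕ}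
    (X : Set (EuclideanSpace ℝ (Fin n))) (Y : Set (EuclideanSpace ℝ (Fin m)))
    (hXne : X.Nonempty) (hXcomp : IsCompact X) (hXconv : Convex ℝ X)
    (hYne : Y.Nonempty) (hYcomp : IsCompact Y)
    (L M α : ℝ) (hL : 0 < L) (hM : 0 < M) (hα : 0 < α)
    (f : EuclideanSpace ℝ (Fin n) → EuclideanSpace ℝ (Fin m) → ℝ)
    (hfc : Continuous fun p : EuclideanSpace ℝ (Fin n) × EuclideanSpace ℝ (Fin m) => f p.1 p.2)
    (f' : EuclideanSpace ℝ (Fin n) → EuclideanSpace ℝ (Fin m) → EuclideanSpace ℝ (Fin n))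
    (hdiff : ∀ y ∈ Y, ∀ x ∈ X, HasGradientAt (fun x' => f x' y) (f' x y) x)
    (hgradbd : ∀ x ∈ X, ∀ y ∈ Y, ‖f' x y‖ ≤ M)
    (hquad : ∀ y ∈ Y, ∀ x₁ ∈ X, ∀ x₂ ∈ X,
      f x₂ y ≥ f x₁ y + (inner ℝ (f' x₁ y) (x₂ - x₁) : ℝ) - L / 2 * ‖x₂ - x₁‖ ^ 2)
    (g : EuclideanSpace ℝ (Fin n) → ℝ)
    (hg : ∀ x, IsGreatest ((fun y => f x y) '' Y) (g x))
    (Φ : EuclideanSpace ℝ (Fin n) → ℝ)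
    (xhat : EuclideanSpace ℝ (Fin n) → EuclideanSpace ℝ (Fin n))
    (hxhatmem : ∀ x, xhat x ∈ X)
    (hxhatmin : ∀ x, ∀ z ∈ X,
      g (xhat x) + L * ‖xhat x - x‖ ^ 2 ≤ g z + L * ‖z - x‖ ^ 2)
    (hΦ : ∀ x, Φ x = g (xhat x) + L * ‖xhat x - x‖ ^ 2)
    (x : EuclideanSpace ℝ (Fin n)) (hx : x ∈ X)
    (ystar : EuclideanSpace ℝ (Fin m)) (hystar : ystar ∈ Y)
    (hattain : f x ystar = g x)
    (xp : EuclideanSpace ℝ (Fin n)) (hxpmem : xp ∈ X)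
    (hxpproj : ∀ z ∈ X,
      ‖xp - (x - α • f' x ystar)‖ ≤ ‖z - (x - α • f' x ystar)‖) :
    Φ xp ≤ Φ x - 2 * α * L ^ 2 * ‖xhat x - x‖ ^ 2 + α ^ 2 * L * M ^ 2 :=
  stmt_10_general X Y hXconv L M α hL hα f f' hgradbd hquad g hg Φ xhat hxhatmem hxhatmin hΦ x hx
    ystar hystar hattain xp hxpmem hxpproj
end

section
/- Let X ⊆ ℝⁿ be a nonempty compact convex set, Y ⊆ ℝᵐ a nonempty compact set, L, M, α > 0, and f : ℝⁿ × ℝᵐ → ℝ continuous such that for each y ∈ Y the map x ↦ f(x, y) is differentiable on X with ‖∇ₓf(x, y)‖ ≤ M for all x ∈ X, y ∈ Y, and satisfying f(x₂, y) ≥ f(x₁, y) + ⟪∇ₓf(x₁, y), x₂ − x₁⟫ − (L/2)‖x₂ − x₁‖² for all x₁, x₂ ∈ X, y ∈ Y. Define g(x) := max_{y ∈ Y} f(x, y), Φ(x) := min_{x' ∈ X} ( g(x') + L‖x' − x‖² ) with unique minimizer x̂(x). Consider iterates x⁽⁰⁾ ∈ X, y⁽ʲ⁾ ∈ argmax_{y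 ∈ Y} f(x⁽ʲ⁾, y), and x⁽ʲ⁺¹⁾ the Euclidean projection of x⁽ʲ⁾ − α∇ₓf(x⁽ʲ⁾, y⁽ʲ⁾) onto X. Then for any J ∈ ℕ: (1/(J+1)) Σ_{j=0}^{J} 4L²‖x̂(x⁽ʲ⁾) − x⁽ʲ⁾‖² ≤ 2(Φ(x⁽⁰⁾) − min_{x ∈ X} g(x)) / (α(J+1)) + 2αLM². -/
/-!
Each `f (·, y)` lies above its linear model minus `(L/2)‖·‖²`, so their pointwise maximum `g`
is `L`-weakly convex. Then `g + L‖· - x‖²` is `L`-strongly convex, which gives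
`g (x̂ x) + (3/2) L ‖x̂ x - x‖² ≤ g x`. Testing the envelope `Φ` at the next iterate with the
old proximal point `x̂ x`, and using that the projection onto `X` does not increase distances
to points of `X`, one step decreases `Φ` by `2αL²‖x̂ x - x‖²` up to an error `α²LM²`.
Telescoping and `Φ ≥ min_X g` give the bound.
-/

open Filter Topology Finset
open scoped RealInnerProductSpace

section

variable {E : Type*} [NormedAddCommGroup E] [InnerProductSpace ℝ E]

/-- Equivalently, `g + (L / 2) * ‖·‖ ^ 2` is convex on the convex set `s`. -/
def WeaklyConvexOn (L : ℝ) (s : Set E) (g : E → ℝ) : Prop :=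
  Convex ℝ s ∧ ∀ a ∈ s, ∀ b ∈ s, ∀ θ : ℝ, 0 ≤ θ → θ ≤ 1 →
    g (a + θ • (b - a)) ≤ (1 - θ) * g a + θ * g b + L / 2 * θ * (1 - θ) * ‖b - a‖ ^ 2

theorem weaklyConvexOn_of_lowerModel {L : ℝ} {s : Set E} {φ : E → ℝ} (φ' : E → E)
    (hs : Convex ℝ s)
    (hφ : ∀ x₁ ∈ s, ∀ x₂ ∈ s, φ x₁ + ⟪φ' x₁, x₂ - x₁⟫ - L / 2 * ‖x₂ - x₁‖ ^ 2 ≤ φ x₂) :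
    WeaklyConvexOn L s φ := by
  refine ⟨hs, fun a ha b hb θ hθ₀ hθ₁ => ?_⟩
  set z := a + θ • (b - a)
  have hz : z ∈ s := hs.add_smul_sub_mem ha hb ⟨hθ₀, hθ₁⟩
  have hza : a - z = -(θ • (b - a)) := by simp only [z]; abel
  have hzb : b - z = (1 - θ) • (b - a) := by simp only [z]; module
  have ha' := hφ z hz a ha
  have hb' := hφ z hz b hb
  rw [hza, inner_neg_right, real_inner_smul_right, norm_neg, norm_smul, Real.norm_of_nonneg hθ₀,
    mul_pow] at ha'
  rw [hzb, real_inner_smul_right, norm_smul, Real.norm_of_nonneg (by linarith), mul_pow] at hb'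
  linarith [mul_le_mul_of_nonneg_left ha' (sub_nonneg.2 hθ₁), mul_le_mul_of_nonneg_left hb' hθ₀]

/-- Taking `z = xp + θ (x - xp)` in the minimality of `xp` and letting `θ → 0`. -/
theorem WeaklyConvexOn.add_three_halves_mul_sq_le_of_isMinOn {L : ℝ} {s : Set E} {g : E → ℝ}
    (hg : WeaklyConvexOn L s g) {x xp : E} (hx : x ∈ s) (hxp : xp ∈ s)
    (hmin : IsMinOn (fun z => g z + L * ‖z - x‖ ^ 2) s xp) :
    g xp + 3 / 2 * L * ‖xp - x‖ ^ 2 ≤ g x := by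
  set D := ‖xp - x‖ ^ 2
  have hgap : ∀ θ ∈ Set.Ioc (0 : ℝ) 1, g xp + 3 / 2 * L * D - g x ≤ L * D / 2 * θ := by
    rintro θ ⟨hθ₀, hθ₁⟩
    have hseg := hg.2 xp hxp x hx θ hθ₀.le hθ₁
    have hz := isMinOn_iff.1 hmin _ (hg.1.add_smul_sub_mem hxp hx ⟨hθ₀.le, hθ₁⟩)
    have hzx : xp + θ • (x - xp) - x = (1 - θ) • (xp - x) := by module
    rw [hzx, norm_smul, Real.norm_of_nonneg (sub_nonneg.2 hθ₁), mul_pow] at hz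
    rw [norm_sub_rev] at hseg
    have hscaled : θ * (g xp + 3 / 2 * L * D - g x) ≤ θ * (L * D / 2 * θ) := by nlinarith
    exact le_of_mul_le_mul_left hscaled hθ₀
  have hlim : Tendsto (fun θ : ℝ => L * D / 2 * θ) (𝓝 0) (𝓝 0) := by
    simpa using (continuous_const_mul (L * D / 2)).tendsto 0
  have := ge_of_tendsto (hlim.mono_left nhdsWithin_le_nhds)
    (eventually_of_mem (Ioc_mem_nhdsGT one_pos) hgap)
  linarith


theorem norm_sub_le_of_isMinOn_norm_sub {K : Set E} (hK : Convex ℝ K) {u p w : E} (hp : p ∈ K)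
    (hmin : IsMinOn (fun z => ‖z - u‖) K p) (hw : w ∈ K) : ‖w - p‖ ≤ ‖w - u‖ := by
  have hinf : ‖u - p‖ = ⨅ z : K, ‖u - z‖ := by
    have : Nonempty K := ⟨⟨p, hp⟩⟩
    refine le_antisymm (le_ciInf fun z => ?_)
      (ciInf_le (f := fun z : K => ‖u - z‖) ⟨0, ?_⟩ ⟨p, hp⟩)
    · rw [norm_sub_rev, norm_sub_rev u]
      exact isMinOn_iff.1 hmin z z.2
    · rintro _ ⟨z, rfl⟩
      exact norm_nonneg _
  have hvar := (norm_eq_iInf_iff_real_inner_le_zero hK hp).1 hinf w hw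
  have hexpand : ‖w - u‖ ^ 2 = ‖w - p‖ ^ 2 - 2 * ⟪w - p, u - p⟫ + ‖u - p‖ ^ 2 := by
    rw [← norm_sub_sq_real, sub_sub_sub_cancel_right]
  rw [← sq_le_sq₀ (norm_nonneg _) (norm_nonneg _), hexpand, real_inner_comm]
  nlinarith [sq_nonneg ‖u - p‖]

theorem lowerModel_of_isGreatest {Y : Type*} {S : Set Y} {s : Set E} {L : ℝ} {f : E → Y → ℝ}
    {f' : E → Y → E} {g : E → ℝ}
    (hf : ∀ y ∈ S, ∀ x₁ ∈ s, ∀ x₂ ∈ s,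
      f x₁ y + ⟪f' x₁ y, x₂ - x₁⟫ - L / 2 * ‖x₂ - x₁‖ ^ 2 ≤ f x₂ y)
    (hg : ∀ x, IsGreatest ((f x ·) '' S) (g x)) ⦃x₁ : E⦄ ⦃y : Y⦄ (hy : y ∈ S)
    (hfy : f x₁ y = g x₁) (hx₁ : x₁ ∈ s) ⦃x₂ : E⦄ (hx₂ : x₂ ∈ s) :
    g x₁ + ⟪f' x₁ y, x₂ - x₁⟫ - L / 2 * ‖x₂ - x₁‖ ^ 2 ≤ g x₂ := by
  rw [← hfy]
  exact (hf y hy x₁ hx₁ x₂ hx₂).trans ((hg x₂).2 ⟨y, hy, rfl⟩)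

theorem weaklyConvexOn_of_isGreatest {Y : Type*} {S : Set Y} {s : Set E} {L : ℝ}
    {f : E → Y → ℝ} (f' : E → Y → E) {g : E → ℝ} (hs : Convex ℝ s)
    (hf : ∀ y ∈ S, ∀ x₁ ∈ s, ∀ x₂ ∈ s,
      f x₁ y + ⟪f' x₁ y, x₂ - x₁⟫ - L / 2 * ‖x₂ - x₁‖ ^ 2 ≤ f x₂ y)
    (hg : ∀ x, IsGreatest ((f x ·) '' S) (g x)) : WeaklyConvexOn L s g := by
  choose y hyS hfy using fun x => (hg x).1
  exact weaklyConvexOn_of_lowerModel (fun x => f' x (y x)) hs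
    fun x₁ hx₁ x₂ hx₂ => lowerModel_of_isGreatest hf hg (hyS x₁) (hfy x₁) hx₁ hx₂

theorem moreauEnvelope_descent_step {s : Set E} {g : E → ℝ} {L M α : ℝ} (hL : 0 ≤ L)
    (hα : 0 ≤ α) (hg : WeaklyConvexOn L s g) {x xp x' xp' v : E} (hx : x ∈ s)
    (hxp : xp ∈ s) (hxp_min : IsMinOn (fun z => g z + L * ‖z - x‖ ^ 2) s xp)
    (hxp'_min : IsMinOn (fun z => g z + L * ‖z - x'‖ ^ 2) s xp')
    (hv : g x + ⟪v, xp - x⟫ - L / 2 * ‖xp - x‖ ^ 2 ≤ g xp) (hvM : ‖v‖ ≤ M)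
    (hx' : x' ∈ s) (hproj : IsMinOn (fun z => ‖z - (x - α • v)‖) s x') :
    g xp' + L * ‖xp' - x'‖ ^ 2 ≤
      g xp + L * ‖xp - x‖ ^ 2 - 2 * α * L ^ 2 * ‖xp - x‖ ^ 2 + α ^ 2 * L * M ^ 2 := by
  set D := ‖xp - x‖ ^ 2
  have henv : g xp' + L * ‖xp' - x'‖ ^ 2 ≤ g xp + L * ‖xp - x'‖ ^ 2 :=
    isMinOn_iff.1 hxp'_min xp hxp
  have hnonexp : ‖xp - x'‖ ^ 2 ≤ ‖xp - (x - α • v)‖ ^ 2 := by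
    gcongr
    exact norm_sub_le_of_isMinOn_norm_sub hg.1 hx' hproj hxp
  have hexpand : ‖xp - (x - α • v)‖ ^ 2 = D + 2 * α * ⟪v, xp - x⟫ + α ^ 2 * ‖v‖ ^ 2 := by
    rw [show xp - (x - α • v) = (xp - x) + α • v by abel, norm_add_sq_real,
      real_inner_smul_right, real_inner_comm, norm_smul, Real.norm_of_nonneg hα, mul_pow]
    ring
  have hprox := hg.add_three_halves_mul_sq_le_of_isMinOn hx hxp hxp_min
  have hvM2 : ‖v‖ ^ 2 ≤ M ^ 2 := pow_le_pow_left₀ (norm_nonneg v) hvM 2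
  have hαL : 0 ≤ α * L := mul_nonneg hα hL
  nlinarith [mul_le_mul_of_nonneg_left hnonexp hL, mul_le_mul_of_nonneg_left hvM2
    (mul_nonneg (sq_nonneg α) hL), mul_le_mul_of_nonneg_left hv hαL,
    mul_le_mul_of_nonneg_left hprox hαL]

end

theorem sum_range_le_of_le_sub_add {a d : ℕ → ℝ} {c : ℝ} (h : ∀ j, a (j + 1) ≤ a j - d j + c)
    (N : ℕ) : ∑ j ∈ range N, d j ≤ a 0 - a N + N * c := by
  induction N with
  | zero => simp
  | succ N ih =>
    rw [sum_range_succ]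
    push_cast
    linarith [h N]

theorem stmt_11_general {n m : ℕ}
    (X : Set (EuclideanSpace ℝ (Fin n))) (Y : Set (EuclideanSpace ℝ (Fin m)))
    (hXconv : Convex ℝ X)
    (L M α : ℝ) (hL : 0 < L) (hα : 0 < α)
    (f : EuclideanSpace ℝ (Fin n) → EuclideanSpace ℝ (Fin m) → ℝ)
    (f' : EuclideanSpace ℝ (Fin n) → EuclideanSpace ℝ (Fin m) → EuclideanSpace ℝ (Fin n))
    (hgradbd : ∀ x ∈ X, ∀ y ∈ Y, ‖f' x y‖ ≤ M)
    (hquad : ∀ y ∈ Y, ∀ x₁ ∈ X, ∀ x₂ ∈ X,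
      f x₂ y ≥ f x₁ y + (inner ℝ (f' x₁ y) (x₂ - x₁) : ℝ) - L / 2 * ‖x₂ - x₁‖ ^ 2)
    (g : EuclideanSpace ℝ (Fin n) → ℝ)
    (hg : ∀ x, IsGreatest ((fun y => f x y) '' Y) (g x))
    (Φ : EuclideanSpace ℝ (Fin n) → ℝ)
    (xhat : EuclideanSpace ℝ (Fin n) → EuclideanSpace ℝ (Fin n))
    (hxhatmem : ∀ x, xhat x ∈ X)
    (hxhatmin : ∀ x, ∀ z ∈ X,
      g (xhat x) + L * ‖xhat x - x‖ ^ 2 ≤ g z + L * ‖z - x‖ ^ 2)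
    (hΦ : ∀ x, Φ x = g (xhat x) + L * ‖xhat x - x‖ ^ 2)
    (gmin : ℝ) (hgmin : IsLeast (g '' X) gmin)
    (xseq : ℕ → EuclideanSpace ℝ (Fin n)) (yseq : ℕ → EuclideanSpace ℝ (Fin m))
    (hx0 : xseq 0 ∈ X)
    (hyseq : ∀ j, yseq j ∈ Y ∧ ∀ y ∈ Y, f (xseq j) y ≤ f (xseq j) (yseq j))
    (hxseqmem : ∀ j, xseq (j + 1) ∈ X)
    (hxseqproj : ∀ j, ∀ z ∈ X,
      ‖xseq (j + 1) - (xseq j - α • f' (xseq j) (yseq j))‖ ≤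
        ‖z - (xseq j - α • f' (xseq j) (yseq j))‖) :
    ∀ J : ℕ,
      (1 / ((J : ℝ) + 1)) * ∑ j ∈ Finset.range (J + 1), 4 * L ^ 2 * ‖xhat (xseq j) - xseq j‖ ^ 2 ≤
        2 * (Φ (xseq 0) - gmin) / (α * ((J : ℝ) + 1)) + 2 * α * L * M ^ 2 := by
  have hmem : ∀ j, xseq j ∈ X := fun j => j.casesOn hx0 hxseqmem
  have hweak : WeaklyConvexOn L X g := weaklyConvexOn_of_isGreatest f' hXconv hquad hg
  have hgseq : ∀ j, f (xseq j) (yseq j) = g (xseq j) := fun j =>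
    ((hg (xseq j)).unique
      ⟨⟨_, (hyseq j).1, rfl⟩, by rintro _ ⟨y, hy, rfl⟩; exact (hyseq j).2 y hy⟩).symm
  have hstep : ∀ j, Φ (xseq (j + 1)) ≤
      Φ (xseq j) - 2 * α * L ^ 2 * ‖xhat (xseq j) - xseq j‖ ^ 2 + α ^ 2 * L * M ^ 2 := by
    intro j
    rw [hΦ, hΦ]
    exact moreauEnvelope_descent_step hL.le hα.le hweak (hmem j) (hxhatmem _)
      (isMinOn_iff.2 (hxhatmin _)) (isMinOn_iff.2 (hxhatmin _))
      (lowerModel_of_isGreatest hquad hg (hyseq j).1 (hgseq j) (hmem j) (hxhatmem _))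
      (hgradbd _ (hmem j) _ (hyseq j).1) (hxseqmem j) (isMinOn_iff.2 (hxseqproj j))
  have hΦ_ge : ∀ x, gmin ≤ Φ x := fun x => by
    rw [hΦ]
    linarith [hgmin.2 ⟨xhat x, hxhatmem x, rfl⟩, mul_nonneg hL.le (sq_nonneg ‖xhat x - x‖)]
  intro J
  have hsum := sum_range_le_of_le_sub_add (a := fun j => Φ (xseq j))
    (d := fun j => 2 * α * L ^ 2 * ‖xhat (xseq j) - xseq j‖ ^ 2) hstep (J + 1)
  calc (1 / ((J : ℝ) + 1)) * ∑ j ∈ range (J + 1), 4 * L ^ 2 * ‖xhat (xseq j) - xseq j‖ ^ 2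
      = 2 / (α * (J + 1)) * ∑ j ∈ range (J + 1), 2 * α * L ^ 2 * ‖xhat (xseq j) - xseq j‖ ^ 2 := by
        rw [mul_sum, mul_sum]
        refine sum_congr rfl fun j _ => ?_
        field_simp
        ring
    _ ≤ 2 / (α * (J + 1)) * (Φ (xseq 0) - gmin + (J + 1) * (α ^ 2 * L * M ^ 2)) := by
        gcongr
        push_cast at hsum
        linarith [hΦ_ge (xseq (J + 1))]
    _ = 2 * (Φ (xseq 0) - gmin) / (α * ((J : ℝ) + 1)) + 2 * α * L * M ^ 2 := by
        field_simp

/-- Averaged bound for the projected subgradient iterates: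
`(1/(J+1)) Σ_{j=0}^{J} 4L²‖x̂(x⁽ʲ⁾) − x⁽ʲ⁾‖² ≤ 2(Φ(x⁽⁰⁾) − min_X g)/(α(J+1)) + 2αLM²`. -/
theorem stmt_11 {n m : ℕ}
    (X : Set (EuclideanSpace ℝ (Fin n))) (Y : Set (EuclideanSpace ℝ (Fin m)))
    (hXne : X.Nonempty) (hXcomp : IsCompact X) (hXconv : Convex ℝ X)
    (hYne : Y.Nonempty) (hYcomp : IsCompact Y)
    (L M α : ℝ) (hL : 0 < L) (hM : 0 < M) (hα : 0 < α)
    (f : EuclideanSpace ℝ (Fin n) → EuclideanSpace ℝ (Fin m) → ℝ)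
    (hfc : Continuous fun p : EuclideanSpace ℝ (Fin n) × EuclideanSpace ℝ (Fin m) => f p.1 p.2)
    (f' : EuclideanSpace ℝ (Fin n) → EuclideanSpace ℝ (Fin m) → EuclideanSpace ℝ (Fin n))
    (hdiff : ∀ y ∈ Y, ∀ x ∈ X, HasGradientAt (fun x' => f x' y) (f' x y) x)
    (hgradbd : ∀ x ∈ X, ∀ y ∈ Y, ‖f' x y‖ ≤ M)
    (hquad : ∀ y ∈ Y, ∀ x₁ ∈ X, ∀ x₂ ∈ X,
      f x₂ y ≥ f x₁ y + (inner ℝ (f' x₁ y) (x₂ - x₁) : ℝ) - L / 2 * ‖x₂ - x₁‖ ^ 2)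
    (g : EuclideanSpace ℝ (Fin n) → ℝ)
    (hg : ∀ x, IsGreatest ((fun y => f x y) '' Y) (g x))
    (Φ : EuclideanSpace ℝ (Fin n) → ℝ)
    (xhat : EuclideanSpace ℝ (Fin n) → EuclideanSpace ℝ (Fin n))
    (hxhatmem : ∀ x, xhat x ∈ X)
    (hxhatmin : ∀ x, ∀ z ∈ X,
      g (xhat x) + L * ‖xhat x - x‖ ^ 2 ≤ g z + L * ‖z - x‖ ^ 2)
    (hΦ : ∀ x, Φ x = g (xhat x) + L * ‖xhat x - x‖ ^ 2)
    (gmin : ℝ) (hgmin : IsLeast (g '' X) gmin)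
    (xseq : ℕ → EuclideanSpace ℝ (Fin n)) (yseq : ℕ → EuclideanSpace ℝ (Fin m))
    (hx0 : xseq 0 ∈ X)
    (hyseq : ∀ j, yseq j ∈ Y ∧ ∀ y ∈ Y, f (xseq j) y ≤ f (xseq j) (yseq j))
    (hxseqmem : ∀ j, xseq (j + 1) ∈ X)
    (hxseqproj : ∀ j, ∀ z ∈ X,
      ‖xseq (j + 1) - (xseq j - α • f' (xseq j) (yseq j))‖ ≤
        ‖z - (xseq j - α • f' (xseq j) (yseq j))‖) :
    ∀ J : ℕ,
      (1 / ((J : ℝ) + 1)) * ∑ j ∈ Finset.range (J + 1), 4 * L ^ 2 * ‖xhat (xseq j) - xseq j‖ ^ 2 ≤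
        2 * (Φ (xseq 0) - gmin) / (α * ((J : ℝ) + 1)) + 2 * α * L * M ^ 2 :=
  stmt_11_general X Y hXconv L M α hL hα f f' hgradbd hquad g hg Φ xhat hxhatmem hxhatmin hΦ gmin
    hgmin xseq yseq hx0 hyseq hxseqmem hxseqproj
end

section
/- Let X ⊆ ℝⁿ be a nonempty compact convex set with diameter at most D > 0, Y ⊆ ℝᵐ a nonempty compact set, and f : ℝⁿ × ℝᵐ → ℝ continuous such that: f is C-Lipschitz on X × Y; for each y ∈ Y, x ↦ f(x, y) is differentiable with ‖∇ₓf(x, y)‖ ≤ M on X × Y; and x ↦ ∇ₓf(x, y) is L-Lipschitz on X for each y ∈ Y, with C, M, L > 0. Define g(x) := max_{y ∈ Y} f(x, y), let x̂(x) be the unique minimizer over X of x' ↦ g(x') + L‖x' − x‖², and Δ := min{LD², CD}. Fix ε > 0 and J ∈ ℕ with J + 1 ≥ 16·Δ·L·M²/ε⁴, set α := √(Δ/(L·M²·(J+1))), and run the projected subgradient iterates x⁽⁰⁾ ∈ X, y⁽ʲ⁾ ∈ argmax_{y ∈ Y} f(x⁽ʲ⁾, y), x⁽ʲ⁺¹⁾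 = projection of x⁽ʲ⁾ − α∇ₓf(x⁽ʲ⁾, y⁽ʲ⁾) onto X. Then min_{0 ≤ j ≤ J} 2L‖x̂(x⁽ʲ⁾) − x⁽ʲ⁾‖ ≤ ε. -/
/-!
A function with `L`-Lipschitz gradient lies above its linearization minus `L/2 ‖x' - x‖²`; the
maximum `g` of such functions inherits this inequality at every point, so `g` is `L`-weakly convex
and `z ↦ g z + L ‖z - x‖²` is `L`-strongly convex. Hence the proximal point `x̂ x` satisfies a
quadratic growth condition, which together with the nonexpansiveness of the projection shows that
one projected subgradient step lowers the Moreau envelope `Φ x = g (x̂ x) + L ‖x̂ x - x‖²` by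
`2αL²‖x̂ x - x‖²`, up to an error `α²LM²`. Telescoping over `J + 1` steps, with
`Φ x⁰ - Φ x^(J+1) ≤ min (LD²) (CD)`, bounds the smallest `‖x̂ xʲ - xʲ‖`, and the choice of `α` and
`J` makes it at most `ε / (2L)`.
-/

open RealInnerProductSpace Filter Topology

section InnerProductSpace

variable {E : Type*} [NormedAddCommGroup E] [InnerProductSpace ℝ E]

/-- The subgradient inequality of an `L`-weakly convex function. -/
def IsWeakSubgradientOn (s : Set E) (L : ℝ) (g : E → ℝ) (x v : E) : Prop :=
  ∀ x' ∈ s, g x + ⟪v, x' - x⟫ - L / 2 * ‖x' - x‖ ^ 2 ≤ g x'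

/-- The descent lemma, as a quadratic lower bound. -/
theorem isWeakSubgradientOn_of_lipschitz_gradient [CompleteSpace E] {s : Set E}
    (hs : Convex ℝ s) {φ : E → ℝ} {φ' : E → E} {L : ℝ} (hφ : ∀ x ∈ s, HasGradientAt φ (φ' x) x)
    (hφ' : ∀ x₁ ∈ s, ∀ x₂ ∈ s, ‖φ' x₁ - φ' x₂‖ ≤ L * ‖x₁ - x₂‖) {x : E} (hx : x ∈ s) :
    IsWeakSubgradientOn s L φ x (φ' x) := by
  intro x' hx'
  set d := x' - x
  have hseg : ∀ t ∈ Set.Icc (0 : ℝ) 1, x + t • d ∈ s := fun t ht => by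
    simpa [d] using hs.add_smul_sub_mem hx hx' ht
  -- The claim is `ψ 0 ≤ ψ 1`; by the Lipschitz bound,
  -- `ψ' t = ⟪φ' (x + t • d) - φ' x, d⟫ + L t ‖d‖²` is nonnegative on `[0, 1]`.
  let ψ : ℝ → ℝ := fun t => φ (x + t • d) - t * ⟪φ' x, d⟫ + L / 2 * t ^ 2 * ‖d‖ ^ 2
  have hψ' : ∀ t ∈ Set.Icc (0 : ℝ) 1,
      HasDerivAt ψ (⟪φ' (x + t • d) - φ' x, d⟫ + L * t * ‖d‖ ^ 2) t := by
    intro t ht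
    have hline : HasDerivAt (fun t : ℝ => x + t • d) d t := by
      simpa using ((hasDerivAt_id t).smul_const d).const_add x
    have hφt := (hφ _ (hseg t ht)).hasFDerivAt.comp_hasDerivAt t hline
    refine ((hφt.sub ((hasDerivAt_id t).mul_const ⟪φ' x, d⟫)).add
      (((hasDerivAt_pow 2 t).const_mul (L / 2)).mul_const (‖d‖ ^ 2))).congr_deriv ?_
    simp only [InnerProductSpace.toDual_apply_apply, inner_sub_left]
    push_cast
    ring
  have hmono : MonotoneOn ψ (Set.Icc 0 1) := by
    refine monotoneOn_of_hasDerivWithinAt_nonneg (convex_Icc 0 1)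
      (fun t ht => (hψ' t ht).continuousAt.continuousWithinAt)
      (fun t ht => (hψ' t (interior_subset ht)).hasDerivWithinAt) fun t ht => ?_
    rw [interior_Icc] at ht
    have hlip : ‖φ' (x + t • d) - φ' x‖ ≤ L * t * ‖d‖ := by
      simpa [norm_smul, abs_of_pos ht.1, mul_assoc] using
        hφ' _ (hseg t (Set.Ioo_subset_Icc_self ht)) x hx
    have := neg_le_of_abs_le (abs_real_inner_le_norm (φ' (x + t • d) - φ' x) d)
    nlinarith [mul_le_mul_of_nonneg_right hlip (norm_nonneg d)]
  have := hmono (by simp) (by simp) zero_le_one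
  simp only [ψ, zero_smul, one_smul, add_zero, zero_mul, one_mul, one_pow, mul_one, sub_zero,
    zero_pow two_ne_zero, mul_zero] at this
  rw [show x + d = x' from add_sub_cancel x x'] at this
  linarith

theorem IsWeakSubgradientOn.of_le {s : Set E} {L : ℝ} {φ g : E → ℝ} {x v : E}
    (h : IsWeakSubgradientOn s L φ x v) (hle : ∀ x' ∈ s, φ x' ≤ g x') (heq : g x = φ x) :
    IsWeakSubgradientOn s L g x v :=
  fun x' hx' => heq ▸ (h x' hx').trans (hle x' hx')

theorem norm_smul_add_smul_sub_sq {a b : ℝ} (hab : a + b = 1) (z w u : E) :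
    ‖a • z + b • w - u‖ ^ 2 = a * ‖z - u‖ ^ 2 + b * ‖w - u‖ ^ 2 - a * b * ‖z - w‖ ^ 2 := by
  obtain rfl := eq_sub_of_add_eq' hab
  have hz : a • z + (1 - a) • w - u = a • (z - u) + (1 - a) • (w - u) := by module
  have hzw : z - w = (z - u) - (w - u) := by abel
  rw [hz, hzw, norm_add_sq_real, norm_sub_sq_real (z - u), norm_smul, norm_smul,
    real_inner_smul_left, real_inner_smul_right, mul_pow, mul_pow, Real.norm_eq_abs,
    Real.norm_eq_abs, sq_abs, sq_abs]
  ring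

theorem strongConvexOn_const_mul_norm_sub_sq {s : Set E} (hs : Convex ℝ s) (c : ℝ) (u : E) :
    StrongConvexOn s (2 * c) fun z => c * ‖z - u‖ ^ 2 := by
  refine ⟨hs, fun z _ w _ a b _ _ hab => le_of_eq ?_⟩
  simp only [norm_smul_add_smul_sub_sq hab, smul_eq_mul]
  ring

theorem StrongConvexOn.add {s : Set E} {m n : ℝ} {f g : E → ℝ} (hf : StrongConvexOn s m f)
    (hg : StrongConvexOn s n g) : StrongConvexOn s (m + n) (f + g) := by
  refine (UniformConvexOn.add hf hg).mono fun r => ?_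
  simp only [Pi.add_apply]
  linarith

theorem strongConvexOn_neg_of_isWeakSubgradientOn {s : Set E} (hs : Convex ℝ s) {L : ℝ}
    {g : E → ℝ} (hg : ∀ x ∈ s, ∃ v, IsWeakSubgradientOn s L g x v) :
    StrongConvexOn s (-L) g := by
  refine ⟨hs, fun z hz w hw a b ha hb hab => ?_⟩
  set m := a • z + b • w
  obtain ⟨v, hv⟩ := hg m (hs hz hw ha hb hab)
  have hzw := norm_smul_add_smul_sub_sq hab z w m
  have hinner : a * ⟪v, z - m⟫ + b * ⟪v, w - m⟫ = 0 := by
    rw [← real_inner_smul_right, ← real_inner_smul_right, ← inner_add_right]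
    convert inner_zero_right (𝕜 := ℝ) v
    simp only [m]
    obtain rfl := eq_sub_of_add_eq' hab
    module
  rw [sub_self, norm_zero] at hzw
  simp only [smul_eq_mul]
  have hz' := mul_le_mul_of_nonneg_left (hv z hz) ha
  have hw' := mul_le_mul_of_nonneg_left (hv w hw) hb
  linear_combination hz' + hw' - hinner - (L / 2) * hzw - g m * hab

theorem StrongConvexOn.add_sq_le_of_isMinOn {s : Set E} {m : ℝ} {h : E → ℝ}
    (hh : StrongConvexOn s m h) {p : E} (hp : p ∈ s) (hmin : IsMinOn h s p) {z : E}
    (hz : z ∈ s) : h p + m / 2 * ‖z - p‖ ^ 2 ≤ h z := by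
  have hineq : ∀ t ∈ Set.Ioo (0 : ℝ) 1, h p + (1 - t) * (m / 2 * ‖z - p‖ ^ 2) ≤ h z := by
    intro t ⟨ht₀, ht₁⟩
    have hconv := hh.2 hz hp ht₀.le (sub_nonneg.2 ht₁.le) (add_sub_cancel t 1)
    have hmin' := hmin (hh.1 hz hp ht₀.le (sub_nonneg.2 ht₁.le) (add_sub_cancel t 1))
    simp only [smul_eq_mul, Set.mem_ofPred_eq] at hconv hmin'
    nlinarith
  have hlim : Tendsto (fun t : ℝ => h p + (1 - t) * (m / 2 * ‖z - p‖ ^ 2)) (𝓝[>] 0)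
      (𝓝 (h p + (1 - 0) * (m / 2 * ‖z - p‖ ^ 2))) :=
    (Continuous.tendsto (by fun_prop) 0).mono_left nhdsWithin_le_nhds
  rw [sub_zero, one_mul] at hlim
  exact le_of_tendsto hlim (eventually_of_mem (Ioo_mem_nhdsGT one_pos) hineq)

theorem strongConvexOn_add_mul_norm_sub_sq {s : Set E} (hs : Convex ℝ s) {L : ℝ} {g : E → ℝ}
    (hg : ∀ x ∈ s, ∃ v, IsWeakSubgradientOn s L g x v) (u : E) :
    StrongConvexOn s L fun z => g z + L * ‖z - u‖ ^ 2 := by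
  have := (strongConvexOn_neg_of_isWeakSubgradientOn hs hg).add
    (strongConvexOn_const_mul_norm_sub_sq hs L u)
  rwa [show -L + 2 * L = L by ring] at this

theorem Convex.norm_sub_le_of_forall_norm_sub_le {K : Set E} (hK : Convex ℝ K) {u p : E}
    (hp : p ∈ K) (hmin : ∀ z ∈ K, ‖p - u‖ ≤ ‖z - u‖) {z : E} (hz : z ∈ K) :
    ‖z - p‖ ≤ ‖z - u‖ := by
  have hsq : IsMinOn (fun z => 1 * ‖z - u‖ ^ 2) K p := fun z hz => by
    simpa using pow_le_pow_left₀ (norm_nonneg _) (hmin z hz) 2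
  have := (strongConvexOn_const_mul_norm_sub_sq hK 1 u).add_sq_le_of_isMinOn hp hsq hz
  refine pow_le_pow_iff_left₀ (norm_nonneg _) (norm_nonneg _) two_ne_zero |>.1 ?_
  nlinarith [sq_nonneg ‖p - u‖]

theorem prox_value_le_of_projected_subgradient_step {K : Set E} (hK : Convex ℝ K) {g : E → ℝ}
    {L α M : ℝ} (hL : 0 ≤ L) (hα : 0 ≤ α) {x v p x₁ p₁ : E} (hv : IsWeakSubgradientOn K L g x v)
    (hvM : ‖v‖ ≤ M)
    (hp : p ∈ K) (hpx : g p + L * ‖p - x‖ ^ 2 + L / 2 * ‖x - p‖ ^ 2 ≤ g x)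
    (hx₁ : x₁ ∈ K) (hproj : ∀ z ∈ K, ‖x₁ - (x - α • v)‖ ≤ ‖z - (x - α • v)‖)
    (hp₁ : g p₁ + L * ‖p₁ - x₁‖ ^ 2 ≤ g p + L * ‖p - x₁‖ ^ 2) :
    g p₁ + L * ‖p₁ - x₁‖ ^ 2 ≤
      g p + L * ‖p - x‖ ^ 2 - 2 * α * L ^ 2 * ‖p - x‖ ^ 2 + α ^ 2 * L * M ^ 2 := by
  have hnonexp : ‖p - x₁‖ ^ 2 ≤ ‖p - (x - α • v)‖ ^ 2 :=
    pow_le_pow_left₀ (norm_nonneg _) (hK.norm_sub_le_of_forall_norm_sub_le hx₁ hproj hp) 2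
  have hexpand : ‖p - (x - α • v)‖ ^ 2 = ‖p - x‖ ^ 2 + 2 * α * ⟪v, p - x⟫ + α ^ 2 * ‖v‖ ^ 2 := by
    rw [show p - (x - α • v) = (p - x) + α • v by abel, norm_add_sq_real, real_inner_smul_right,
      norm_smul, mul_pow, Real.norm_eq_abs, sq_abs, real_inner_comm]
    ring
  have hinner : ⟪v, p - x⟫ ≤ -L * ‖p - x‖ ^ 2 := by
    have := hv p hp
    rw [norm_sub_rev x p] at hpx
    linarith
  have hvM' : ‖v‖ ^ 2 ≤ M ^ 2 := pow_le_pow_left₀ (norm_nonneg _) hvM 2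
  nlinarith [mul_le_mul_of_nonneg_left hinner (by positivity : 0 ≤ 2 * α * L),
    mul_le_mul_of_nonneg_left hvM' (by positivity : 0 ≤ α ^ 2 * L),
    mul_le_mul_of_nonneg_left hnonexp hL]

end InnerProductSpace

theorem sub_le_of_isGreatest_image {α β : Type*} {f : α → β → ℝ} {Y : Set β} {g : α → ℝ}
    (hg : ∀ x, IsGreatest (f x '' Y) (g x)) {x x' : α} {c : ℝ}
    (h : ∀ y ∈ Y, f x y - f x' y ≤ c) : g x - g x' ≤ c := by
  obtain ⟨y, hy, hxy⟩ := (hg x).1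
  have := (hg x').2 ⟨y, hy, rfl⟩
  linarith [h y hy]

theorem exists_le_of_le_sub_add {Φ a : ℕ → ℝ} {c : ℝ} (h : ∀ j, Φ (j + 1) ≤ Φ j - a j + c)
    (N : ℕ) : ∃ j ≤ N, a j ≤ (Φ 0 - Φ (N + 1)) / (N + 1) + c := by
  have hsum : ∑ j ∈ Finset.range (N + 1), a j ≤
      ∑ j ∈ Finset.range (N + 1), ((Φ 0 - Φ (N + 1)) / (N + 1) + c) := by
    calc ∑ j ∈ Finset.range (N + 1), a j
        ≤ ∑ j ∈ Finset.range (N + 1), (Φ j - Φ (j + 1) + c) :=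
          Finset.sum_le_sum fun j _ => by linarith [h j]
      _ = _ := by
        rw [Finset.sum_add_distrib, Finset.sum_range_sub', Finset.sum_const, Finset.sum_const,
          Finset.card_range, nsmul_eq_mul, nsmul_eq_mul, mul_add]
        push_cast
        field_simp
  obtain ⟨j, hj, hle⟩ := Finset.exists_le_of_sum_le Finset.nonempty_range_add_one hsum
  exact ⟨j, Nat.lt_succ_iff.1 (Finset.mem_range.1 hj), hle⟩

theorem prox_value_le_add_min {E : Type*} [SeminormedAddCommGroup E] {K : Set E} {g : E → ℝ}
    {L C D : ℝ} (hL : 0 ≤ L) {x₀ p₀ q x₁ : E}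
    (hp₀ : ∀ z ∈ K, g p₀ + L * ‖p₀ - x₀‖ ^ 2 ≤ g z + L * ‖z - x₀‖ ^ 2) (hx₀ : x₀ ∈ K)
    (hq : q ∈ K) (hqD : ‖q - x₀‖ ≤ D) (hgC : g x₀ - g q ≤ C * D) :
    g p₀ + L * ‖p₀ - x₀‖ ^ 2 ≤ g q + L * ‖q - x₁‖ ^ 2 + min (L * D ^ 2) (C * D) := by
  have hq₁ : 0 ≤ L * ‖q - x₁‖ ^ 2 := by positivity
  have hLD : L * ‖q - x₀‖ ^ 2 ≤ L * D ^ 2 :=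
    mul_le_mul_of_nonneg_left (pow_le_pow_left₀ (norm_nonneg _) hqD 2) hL
  have hx₀' := hp₀ x₀ hx₀
  rw [sub_self, norm_zero] at hx₀'
  rcases min_choice (L * D ^ 2) (C * D) with h | h <;> rw [h]
  · linarith [hp₀ q hq]
  · linarith

theorem two_mul_mul_le_of_step_size {Δ L M ε K α d : ℝ} (hΔ : 0 < Δ) (hL : 0 < L) (hM : 0 < M)
    (hε : 0 < ε) (hK : 16 * Δ * L * M ^ 2 / ε ^ 4 ≤ K) (hα : α = √(Δ / (L * M ^ 2 * K)))
    (hd : 0 ≤ d) (h : 2 * α * L ^ 2 * d ^ 2 ≤ Δ / K + α ^ 2 * L * M ^ 2) : 2 * L * d ≤ ε := by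
  have hKpos : 0 < K := lt_of_lt_of_le (by positivity) hK
  have hαpos : 0 < α := hα ▸ Real.sqrt_pos.2 (by positivity)
  have hαsq : α ^ 2 * L * M ^ 2 * K = Δ := by
    rw [hα, Real.sq_sqrt (by positivity)]
    field_simp
  have hLd : L * d ^ 2 ≤ α * M ^ 2 := by
    rw [← hαsq, mul_div_cancel_right₀ _ hKpos.ne'] at h
    refine le_of_mul_le_mul_left ?_ (by positivity : 0 < 2 * α * L)
    nlinarith
  have hαε : α * (4 * L * M ^ 2) ≤ ε ^ 2 := by
    rw [div_le_iff₀ (by positivity)] at hK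
    rw [← pow_le_pow_iff_left₀ (by positivity) (by positivity) two_ne_zero]
    refine le_of_mul_le_mul_right ?_ hKpos
    calc (α * (4 * L * M ^ 2)) ^ 2 * K = 16 * (α ^ 2 * L * M ^ 2 * K) * L * M ^ 2 := by ring
      _ ≤ (ε ^ 2) ^ 2 * K := by rw [hαsq]; linarith
  refine (pow_le_pow_iff_left₀ (by positivity) hε.le two_ne_zero).1 ?_
  nlinarith

theorem stmt_16_general {n m : ℕ}
    (X : Set (EuclideanSpace ℝ (Fin n))) (Y : Set (EuclideanSpace ℝ (Fin m)))
    (hXconv : Convex ℝ X)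
    (D C M L : ℝ) (hD : 0 < D) (hC : 0 < C) (hM : 0 < M) (hL : 0 < L)
    (hdiam : ∀ x₁ ∈ X, ∀ x₂ ∈ X, ‖x₁ - x₂‖ ≤ D)
    (f : EuclideanSpace ℝ (Fin n) → EuclideanSpace ℝ (Fin m) → ℝ)
    (hflip : ∀ x₁ ∈ X, ∀ y₁ ∈ Y, ∀ x₂ ∈ X, ∀ y₂ ∈ Y,
      |f x₁ y₁ - f x₂ y₂| ≤ C * dist ((x₁, y₁) : EuclideanSpace ℝ (Fin n) × EuclideanSpace ℝ (Fin m)) (x₂, y₂))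
    (f' : EuclideanSpace ℝ (Fin n) → EuclideanSpace ℝ (Fin m) → EuclideanSpace ℝ (Fin n))
    (hdiff : ∀ y ∈ Y, ∀ x ∈ X, HasGradientAt (fun x' => f x' y) (f' x y) x)
    (hgradbd : ∀ x ∈ X, ∀ y ∈ Y, ‖f' x y‖ ≤ M)
    (hgradlip : ∀ y ∈ Y, ∀ x₁ ∈ X, ∀ x₂ ∈ X, ‖f' x₁ y - f' x₂ y‖ ≤ L * ‖x₁ - x₂‖)
    (g : EuclideanSpace ℝ (Fin n) → ℝ)
    (hg : ∀ x, IsGreatest ((fun y => f x y) '' Y) (g x))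
    (xhat : EuclideanSpace ℝ (Fin n) → EuclideanSpace ℝ (Fin n))
    (hxhatmem : ∀ x, xhat x ∈ X)
    (hxhatmin : ∀ x, ∀ z ∈ X,
      g (xhat x) + L * ‖xhat x - x‖ ^ 2 ≤ g z + L * ‖z - x‖ ^ 2)
    (Δ : ℝ) (hΔ : Δ = min (L * D ^ 2) (C * D))
    (ε : ℝ) (hε : 0 < ε)
    (J : ℕ) (hJ : (16 : ℝ) * Δ * L * M ^ 2 / ε ^ 4 ≤ (J : ℝ) + 1)
    (α : ℝ) (hα : α = Real.sqrt (Δ / (L * M ^ 2 * ((J : ℝ) + 1))))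
    (xseq : ℕ → EuclideanSpace ℝ (Fin n)) (yseq : ℕ → EuclideanSpace ℝ (Fin m))
    (hx0 : xseq 0 ∈ X)
    (hyseq : ∀ j, yseq j ∈ Y ∧ ∀ y ∈ Y, f (xseq j) y ≤ f (xseq j) (yseq j))
    (hxseqmem : ∀ j, xseq (j + 1) ∈ X)
    (hxseqproj : ∀ j, ∀ z ∈ X,
      ‖xseq (j + 1) - (xseq j - α • f' (xseq j) (yseq j))‖ ≤
        ‖z - (xseq j - α • f' (xseq j) (yseq j))‖) :
    ∃ j ≤ J, 2 * L * ‖xhat (xseq j) - xseq j‖ ≤ ε := by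
  have hxmem : ∀ j, xseq j ∈ X := fun j => by cases j with
    | zero => exact hx0
    | succ j => exact hxseqmem j
  have hgsub : ∀ x ∈ X, ∀ y ∈ Y, f x y = g x → IsWeakSubgradientOn X L g x (f' x y) :=
    fun x hx y hy hxy =>
      (isWeakSubgradientOn_of_lipschitz_gradient hXconv (hdiff y hy) (hgradlip y hy) hx).of_le
        (fun x' _ => (hg x').2 ⟨y, hy, rfl⟩) hxy.symm
  have hgxseq : ∀ j, f (xseq j) (yseq j) = g (xseq j) := fun j => ((hg _).unique
    ⟨⟨yseq j, (hyseq j).1, rfl⟩, by rintro _ ⟨y, hy, rfl⟩; exact (hyseq j).2 y hy⟩).symm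
  have hprox : ∀ x, ∀ z ∈ X,
      g (xhat x) + L * ‖xhat x - x‖ ^ 2 + L / 2 * ‖z - xhat x‖ ^ 2 ≤ g z + L * ‖z - x‖ ^ 2 :=
    fun x z hz => (strongConvexOn_add_mul_norm_sub_sq hXconv
      (fun x hx => (hg x).1.elim fun y ⟨hy, hxy⟩ => ⟨_, hgsub x hx y hy hxy⟩) x
      ).add_sq_le_of_isMinOn (hxhatmem x) (hxhatmin x) hz
  have hstep : ∀ j, g (xhat (xseq (j + 1))) + L * ‖xhat (xseq (j + 1)) - xseq (j + 1)‖ ^ 2 ≤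
      g (xhat (xseq j)) + L * ‖xhat (xseq j) - xseq j‖ ^ 2
        - 2 * α * L ^ 2 * ‖xhat (xseq j) - xseq j‖ ^ 2 + α ^ 2 * L * M ^ 2 := fun j =>
    prox_value_le_of_projected_subgradient_step hXconv hL.le (hα ▸ Real.sqrt_nonneg _)
      (hgsub _ (hxmem j) _ (hyseq j).1 (hgxseq j)) (hgradbd _ (hxmem j) _ (hyseq j).1)
      (hxhatmem _) (by simpa using hprox (xseq j) _ (hxmem j)) (hxseqmem j) (hxseqproj j)
      (hxhatmin _ _ (hxhatmem _))
  have hgLip : ∀ x ∈ X, ∀ x' ∈ X, g x - g x' ≤ C * ‖x - x'‖ := fun x hx x' hx' =>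
    sub_le_of_isGreatest_image hg fun y hy => (le_abs_self _).trans <|
      by simpa [dist_prod_same_right, dist_eq_norm] using hflip x hx y hy x' hx' y hy
  have hgap := prox_value_le_add_min (x₁ := xseq (J + 1)) hL.le (hxhatmin (xseq 0)) hx0
    (hxhatmem (xseq (J + 1))) (hdiam _ (hxhatmem _) _ hx0) <| (hgLip _ hx0 _ (hxhatmem _)).trans <|
      mul_le_mul_of_nonneg_left (hdiam _ hx0 _ (hxhatmem _)) hC.le
  obtain ⟨j, hjJ, hj⟩ := exists_le_of_le_sub_add
    (Φ := fun j => g (xhat (xseq j)) + L * ‖xhat (xseq j) - xseq j‖ ^ 2)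
    (a := fun j => 2 * α * L ^ 2 * ‖xhat (xseq j) - xseq j‖ ^ 2) hstep J
  refine ⟨j, hjJ, two_mul_mul_le_of_step_size (K := J + 1) ?_ hL hM hε hJ hα (norm_nonneg _) ?_⟩
  · rw [hΔ]; positivity
  · rw [← hΔ] at hgap
    exact hj.trans (add_le_add_left (div_le_div_of_nonneg_right (by linarith) (by positivity)) _)

/-- `O(ε⁻⁴)` iteration complexity of the projected subgradient algorithm:
if `J + 1 ≥ 16ΔLM²/ε⁴` and `α = √(Δ/(LM²(J+1)))`, then
`min_{0 ≤ j ≤ J} 2L‖x̂(x⁽ʲ⁾) − x⁽ʲ⁾‖ ≤ ε`, i.e. some iterate is `ε`-near-stationary. -/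
theorem stmt_16 {n m : ℕ}
    (X : Set (EuclideanSpace ℝ (Fin n))) (Y : Set (EuclideanSpace ℝ (Fin m)))
    (hXne : X.Nonempty) (hXcomp : IsCompact X) (hXconv : Convex ℝ X)
    (hYne : Y.Nonempty) (hYcomp : IsCompact Y)
    (D C M L : ℝ) (hD : 0 < D) (hC : 0 < C) (hM : 0 < M) (hL : 0 < L)
    (hdiam : ∀ x₁ ∈ X, ∀ x₂ ∈ X, ‖x₁ - x₂‖ ≤ D)
    (f : EuclideanSpace ℝ (Fin n) → EuclideanSpace ℝ (Fin m) → ℝ)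
    (hfc : Continuous fun p : EuclideanSpace ℝ (Fin n) × EuclideanSpace ℝ (Fin m) => f p.1 p.2)
    (hflip : ∀ x₁ ∈ X, ∀ y₁ ∈ Y, ∀ x₂ ∈ X, ∀ y₂ ∈ Y,
      |f x₁ y₁ - f x₂ y₂| ≤ C * dist ((x₁, y₁) : EuclideanSpace ℝ (Fin n) × EuclideanSpace ℝ (Fin m)) (x₂, y₂))
    (f' : EuclideanSpace ℝ (Fin n) → EuclideanSpace ℝ (Fin m) → EuclideanSpace ℝ (Fin n))
    (hdiff : ∀ y ∈ Y, ∀ x ∈ X, HasGradientAt (fun x' => f x' y) (f' x y) x)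
    (hgradbd : ∀ x ∈ X, ∀ y ∈ Y, ‖f' x y‖ ≤ M)
    (hgradlip : ∀ y ∈ Y, ∀ x₁ ∈ X, ∀ x₂ ∈ X, ‖f' x₁ y - f' x₂ y‖ ≤ L * ‖x₁ - x₂‖)
    (g : EuclideanSpace ℝ (Fin n) → ℝ)
    (hg : ∀ x, IsGreatest ((fun y => f x y) '' Y) (g x))
    (xhat : EuclideanSpace ℝ (Fin n) → EuclideanSpace ℝ (Fin n))
    (hxhatmem : ∀ x, xhat x ∈ X)
    (hxhatmin : ∀ x, ∀ z ∈ X,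
      g (xhat x) + L * ‖xhat x - x‖ ^ 2 ≤ g z + L * ‖z - x‖ ^ 2)
    (Δ : ℝ) (hΔ : Δ = min (L * D ^ 2) (C * D))
    (ε : ℝ) (hε : 0 < ε)
    (J : ℕ) (hJ : (16 : ℝ) * Δ * L * M ^ 2 / ε ^ 4 ≤ (J : ℝ) + 1)
    (α : ℝ) (hα : α = Real.sqrt (Δ / (L * M ^ 2 * ((J : ℝ) + 1))))
    (xseq : ℕ → EuclideanSpace ℝ (Fin n)) (yseq : ℕ → EuclideanSpace ℝ (Fin m))
    (hx0 : xseq 0 ∈ X)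
    (hyseq : ∀ j, yseq j ∈ Y ∧ ∀ y ∈ Y, f (xseq j) y ≤ f (xseq j) (yseq j))
    (hxseqmem : ∀ j, xseq (j + 1) ∈ X)
    (hxseqproj : ∀ j, ∀ z ∈ X,
      ‖xseq (j + 1) - (xseq j - α • f' (xseq j) (yseq j))‖ ≤
        ‖z - (xseq j - α • f' (xseq j) (yseq j))‖) :
    ∃ j ≤ J, 2 * L * ‖xhat (xseq j) - xseq j‖ ≤ ε :=
  stmt_16_general X Y hXconv D C M L hD hC hM hL hdiam f hflip f' hdiff hgradbd hgradlip g hg xhat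
    hxhatmem hxhatmin Δ hΔ ε hε J hJ α hα xseq yseq hx0 hyseq hxseqmem hxseqproj
end
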